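/- (Single-task market is robust to replication.) Let N be a finite set of M ≥ 1 parties, i ∈ N, i' ∉ N, N^R = N ∪ {i'}. Let g : Finset N^R → ℝ be nonnegative, monotone, and supermodular, with g(N) > 0, and suppose i and i' are replicas with respect to g, i.e., g(S ∪ {i}) = g(S ∪ {i'}) = g(S ∪ {i, i'}) for every S ⊆ N^R. Define v(S) = (|S|+1)·g(S) − Σ_{j∈S} g({j}), a_j = g(N) − g({j}) for j ∈ N, and A = Σ_{j∈N} a_j. Let φ(i) be the normalized Shapley value of i computed from v on the market N, and φ^R(i) its normalized Shapley value computed from v on the market N^R. Then 2 · φ^R(i) · (A + a_i) ≤ φ(i) · A + a_i; i.e., party i's total payoff t^R = 2(φ^R(i)(A + a_i) − a_i) after replicating its data once does not exceed its payoff t = φ(i)A − a_i in the original market. -/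

import Mathlib

open Finset

/-- The single-task characteristic function
`v(S) = (|S|+1)·g(S) − Σ_{j∈S} g({j})`. -/
noncomputable def singleTaskValue {ι : Type*} [DecidableEq ι] (g : Finset ι → ℝ)
    (S : Finset ι) : ℝ :=
  ((S.card : ℝ) + 1) * g S - ∑ j ∈ S, g {j}

/-- The normalized Shapley value of party `i` for the characteristic function `v`
in the market `market` with `m = |market|` parties:
`φ(v,i) = (1/v(market)) · Σ_{S ⊆ market \ {i}} (|S|!(m−|S|−1)!/m!) · (v(S∪{i}) − v(S))`. -/
noncomputable def shapley {ι : Type*} [DecidableEq ι] (market : Finset ι)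
    (v : Finset ι → ℝ) (i : ι) : ℝ :=
  (1 / v market) * ∑ S ∈ (market.erase i).powerset,
    (S.card.factorial * (market.card - S.card - 1).factorial : ℝ)
      / (market.card.factorial : ℝ) * (v (insert i S) - v S)

/-!
Write `E = N \ {i}`, `n = |E|`, `d T = g (T ∪ {i}) - g T`, and `φ`, `φᴿ` for the Shapley sums
of `i` before normalization. Supermodularity bounds every marginal contribution of `i` by
`v N = g N + A`, so `φ ≤ v N`. In the replicated market each `T ⊆ E` also appears as `T ∪ {i'}`,
to which `i` adds only `g (T ∪ {i}) - g {i} ≤ a_i` by the replica property. Comparing the Shapley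
weights of the two markets gives, with `w_T` the weight of `T` in `N`,
`2 φᴿ = φ + ∑_T w_T (g (T ∪ {i}) - g {i}) + (n + 2)⁻¹ ∑_T w_T (|T| + 1) (n - 2|T|) d T`,
and the last sum is nonpositive by a Chebyshev argument: the average of `d` over the `t`-subsets
of `E` increases with `t` by supermodularity, while the coefficients change sign once and have
nonpositive total. Hence `2 φᴿ ≤ φ + a_i`; since `v Nᴿ = v N + a_i`, the claim is then algebra.
-/

noncomputable def shapleyWeight (m t : ℕ) : ℝ :=
  (t.factorial * (m - t - 1).factorial : ℝ) / (m.factorial : ℝ)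

noncomputable def shapleySum {ι : Type*} [DecidableEq ι] (market : Finset ι)
    (v : Finset ι → ℝ) (i : ι) : ℝ :=
  ∑ S ∈ (market.erase i).powerset, shapleyWeight market.card S.card * (v (insert i S) - v S)

theorem shapley_eq_shapleySum {ι : Type*} [DecidableEq ι] (market : Finset ι)
    (v : Finset ι → ℝ) (i : ι) : shapley market v i = (1 / v market) * shapleySum market v i :=
  rfl

theorem shapleyWeight_nonneg (m t : ℕ) : 0 ≤ shapleyWeight m t := by
  unfold shapleyWeight; positivity

theorem choose_mul_shapleyWeight {n t : ℕ} (ht : t ≤ n) :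
    (n.choose t : ℝ) * shapleyWeight (n + 1) t = 1 / (n + 1) := by
  have hchoose : (n.choose t * t.factorial * (n - t).factorial : ℝ) = n.factorial := by
    exact_mod_cast Nat.choose_mul_factorial_mul_factorial ht
  rw [shapleyWeight, show n + 1 - t - 1 = n - t by omega, Nat.factorial_succ]
  push_cast
  field_simp
  linear_combination hchoose

theorem shapleyWeight_succ {n t : ℕ} (ht : t ≤ n) :
    shapleyWeight (n + 2) t = shapleyWeight (n + 1) t * ((n + 1 - t) / (n + 2)) := by
  have hsub : n + 2 - t - 1 = (n - t) + 1 := by omega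
  have hcast : ((n - t : ℕ) : ℝ) = n - t := Nat.cast_sub ht
  rw [shapleyWeight, shapleyWeight, hsub, Nat.factorial_succ (n + 1), Nat.factorial_succ,
    show n + 1 - t - 1 = n - t by omega]
  push_cast [hcast]
  field_simp
  ring

theorem shapleyWeight_succ_succ (n t : ℕ) :
    shapleyWeight (n + 2) (t + 1) = shapleyWeight (n + 1) t * ((t + 1) / (n + 2)) := by
  rw [shapleyWeight, shapleyWeight, show n + 2 - (t + 1) - 1 = n + 1 - t - 1 by omega,
    Nat.factorial_succ (n + 1), Nat.factorial_succ t]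
  push_cast
  field_simp
  ring

theorem sum_powerset_shapleyWeight {ι : Type*} (E : Finset ι) :
    ∑ T ∈ E.powerset, shapleyWeight (E.card + 1) T.card = 1 := by
  rw [sum_powerset_apply_card (shapleyWeight (E.card + 1)), sum_congr rfl fun t ht => by
    rw [nsmul_eq_mul, choose_mul_shapleyWeight (Nat.lt_succ_iff.1 (mem_range.1 ht))],
    sum_const, card_range, nsmul_eq_mul]
  push_cast
  field_simp

theorem sum_powersetCard_sum_sdiff_insert {ι : Type*} [DecidableEq ι] (E : Finset ι) (t : ℕ)
    (f : Finset ι → ℝ) :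
    ∑ T ∈ E.powersetCard t, ∑ x ∈ E \ T, f (insert x T)
      = ∑ B ∈ E.powersetCard (t + 1), ∑ _x ∈ B, f B := by
  rw [sum_sigma', sum_sigma']
  refine sum_bij' (fun p _ => ⟨insert p.2 p.1, p.2⟩) (fun q _ => ⟨q.1.erase q.2, q.2⟩)
    ?_ ?_ ?_ ?_ fun _ _ => rfl
  · rintro ⟨T, x⟩ hp
    simp only [mem_sigma, mem_powersetCard, mem_sdiff] at hp ⊢
    exact ⟨⟨insert_subset hp.2.1 hp.1.1, by rw [card_insert_of_notMem hp.2.2, hp.1.2]⟩,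
      mem_insert_self _ _⟩
  · rintro ⟨B, x⟩ hq
    simp only [mem_sigma, mem_powersetCard, mem_sdiff] at hq ⊢
    exact ⟨⟨(erase_subset _ _).trans hq.1.1, by rw [card_erase_of_mem hq.2, hq.1.2]; rfl⟩,
      hq.1.1 hq.2, notMem_erase _ _⟩
  · rintro ⟨T, x⟩ hp
    simp only [mem_sigma, mem_sdiff] at hp
    simp [erase_insert hp.2.2]
  · rintro ⟨B, x⟩ hq
    simp [insert_erase (mem_sigma.1 hq).2]

section Layers

variable {ι : Type*} {E : Finset ι} {d : Finset ι → ℝ}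

theorem card_sub_mul_sum_powersetCard_le [DecidableEq ι]
    (hd : ∀ T ⊆ E, ∀ x ∈ E, x ∉ T → d T ≤ d (insert x T)) (t : ℕ) :
    ((E.card - t : ℕ) : ℝ) * ∑ T ∈ E.powersetCard t, d T
      ≤ (t + 1) * ∑ B ∈ E.powersetCard (t + 1), d B := by
  calc ((E.card - t : ℕ) : ℝ) * ∑ T ∈ E.powersetCard t, d T
      = ∑ T ∈ E.powersetCard t, ∑ _x ∈ E \ T, d T := by
        rw [mul_sum]
        refine sum_congr rfl fun T hT => ?_
        obtain ⟨hTE, hTc⟩ := mem_powersetCard.1 hT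
        rw [sum_const, card_sdiff_of_subset hTE, hTc, nsmul_eq_mul]
    _ ≤ ∑ T ∈ E.powersetCard t, ∑ x ∈ E \ T, d (insert x T) := by
        refine sum_le_sum fun T hT => sum_le_sum fun x hx => ?_
        exact hd T (mem_powersetCard.1 hT).1 x (mem_sdiff.1 hx).1 (mem_sdiff.1 hx).2
    _ = ∑ B ∈ E.powersetCard (t + 1), ∑ _x ∈ B, d B :=
        sum_powersetCard_sum_sdiff_insert E t d
    _ = (t + 1) * ∑ B ∈ E.powersetCard (t + 1), d B := by
        rw [mul_sum]
        refine sum_congr rfl fun B hB => ?_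
        rw [sum_const, (mem_powersetCard.1 hB).2, nsmul_eq_mul]
        push_cast
        ring

variable (E d) in
noncomputable def powersetCardAverage (t : ℕ) : ℝ :=
  (∑ T ∈ E.powersetCard t, d T) / E.card.choose t

theorem choose_mul_powersetCardAverage {t : ℕ} (ht : t ≤ E.card) :
    (E.card.choose t : ℝ) * powersetCardAverage E d t = ∑ T ∈ E.powersetCard t, d T :=
  mul_div_cancel₀ _ (by exact_mod_cast (Nat.choose_pos ht).ne')

theorem powersetCardAverage_nonneg (hd : ∀ T ⊆ E, 0 ≤ d T) (t : ℕ) :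
    0 ≤ powersetCardAverage E d t :=
  div_nonneg (sum_nonneg fun T hT => hd T (mem_powersetCard.1 hT).1) (Nat.cast_nonneg _)

theorem powersetCardAverage_monotoneOn [DecidableEq ι]
    (hd : ∀ T ⊆ E, ∀ x ∈ E, x ∉ T → d T ≤ d (insert x T)) :
    MonotoneOn (powersetCardAverage E d) (Set.Iic E.card) := by
  refine monotoneOn_of_le_succ Set.ordConnected_Iic fun t _ _ ht => ?_
  rw [Order.succ_eq_add_one, Set.mem_Iic] at ht
  rw [Order.succ_eq_add_one]
  have hchoose : (E.card.choose (t + 1) : ℝ) * (t + 1) = E.card.choose t * (E.card - t : ℕ) := by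
    exact_mod_cast Nat.choose_succ_right_eq E.card t
  have hpos : (0 : ℝ) < E.card.choose t := by exact_mod_cast Nat.choose_pos (by omega)
  have hdc := card_sub_mul_sum_powersetCard_le hd t
  rw [← choose_mul_powersetCardAverage (by omega : t ≤ E.card),
    ← choose_mul_powersetCardAverage ht] at hdc
  have hkey : ((E.card.choose t : ℝ) * (E.card - t : ℕ)) * powersetCardAverage E d t
      ≤ ((E.card.choose t : ℝ) * (E.card - t : ℕ)) * powersetCardAverage E d (t + 1) := by
    calc _ = ((E.card - t : ℕ) : ℝ) * (E.card.choose t * powersetCardAverage E d t) := by ring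
      _ ≤ (t + 1) * (E.card.choose (t + 1) * powersetCardAverage E d (t + 1)) := hdc
      _ = _ := by rw [← hchoose]; ring
  have hsub : (0 : ℝ) < (E.card - t : ℕ) := by exact_mod_cast (by omega : 0 < E.card - t)
  exact le_of_mul_le_mul_left hkey (mul_pos hpos hsub)

end Layers

theorem sum_mul_nonpos_of_monotoneOn {n k : ℕ} {c D : ℕ → ℝ} (hk : k ≤ n)
    (hD : MonotoneOn D (Set.Iic n)) (hDk : 0 ≤ D k)
    (hc_nonneg : ∀ t ≤ k, 0 ≤ c t) (hc_nonpos : ∀ t, k < t → c t ≤ 0)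
    (hc_sum : ∑ t ∈ range (n + 1), c t ≤ 0) :
    ∑ t ∈ range (n + 1), c t * D t ≤ 0 := by
  calc ∑ t ∈ range (n + 1), c t * D t ≤ ∑ t ∈ range (n + 1), c t * D k := by
        refine sum_le_sum fun t ht => ?_
        have htn : t ∈ Set.Iic n := Set.mem_Iic.2 (Nat.lt_succ_iff.1 (mem_range.1 ht))
        rcases le_or_gt t k with htk | hkt
        · exact mul_le_mul_of_nonneg_left (hD htn (Set.mem_Iic.2 hk) htk) (hc_nonneg t htk)
        · exact mul_le_mul_of_nonpos_left (hD (Set.mem_Iic.2 hk) htn hkt.le) (hc_nonpos t hkt)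
    _ = (∑ t ∈ range (n + 1), c t) * D k := (sum_mul ..).symm
    _ ≤ 0 := mul_nonpos_of_nonpos_of_nonneg hc_sum hDk

theorem sum_range_succ_mul_sub_two_mul (n : ℕ) :
    ∑ t ∈ range (n + 1), ((t : ℝ) + 1) * (n - 2 * t) = -(n * (n + 1) * (n + 2) / 6) := by
  have key : ∀ m : ℕ, ∑ t ∈ range m, ((t : ℝ) + 1) * (n - 2 * t)
      = n * (m * (m + 1) / 2) - 2 * ((m : ℝ) - 1) * m * (m + 1) / 3 := by
    intro m
    induction m with
    | zero => simp
    | succ m ih => rw [sum_range_succ, ih]; push_cast; ring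
  rw [key]
  push_cast
  ring

theorem sum_powerset_shapleyWeight_mul_nonpos {ι : Type*} [DecidableEq ι] {E : Finset ι}
    {d : Finset ι → ℝ} (hd0 : ∀ T ⊆ E, 0 ≤ d T)
    (hd : ∀ T ⊆ E, ∀ x ∈ E, x ∉ T → d T ≤ d (insert x T)) :
    ∑ T ∈ E.powerset,
      shapleyWeight (E.card + 1) T.card * (((T.card : ℝ) + 1) * (E.card - 2 * T.card)) * d T
      ≤ 0 := by
  set n := E.card
  set c : ℕ → ℝ := fun t => ((t : ℝ) + 1) * (n - 2 * t)
  have hlayers : ∑ T ∈ E.powerset, shapleyWeight (n + 1) T.card * c T.card * d T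
      = (1 / (n + 1)) * ∑ t ∈ range (n + 1), c t * powersetCardAverage E d t := by
    rw [sum_powerset, mul_sum]
    refine sum_congr rfl fun t ht => ?_
    have htn : t ≤ n := Nat.lt_succ_iff.1 (mem_range.1 ht)
    calc ∑ T ∈ E.powersetCard t, shapleyWeight (n + 1) T.card * c T.card * d T
        = shapleyWeight (n + 1) t * c t * ∑ T ∈ E.powersetCard t, d T := by
          rw [mul_sum]
          exact sum_congr rfl fun T hT => by rw [(mem_powersetCard.1 hT).2]
      _ = ((n.choose t : ℝ) * shapleyWeight (n + 1) t) * (c t * powersetCardAverage E d t) := by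
          rw [← choose_mul_powersetCardAverage htn]; ring
      _ = _ := by rw [choose_mul_shapleyWeight htn]
  refine hlayers.le.trans (mul_nonpos_of_nonneg_of_nonpos (by positivity) ?_)
  refine sum_mul_nonpos_of_monotoneOn (Nat.div_le_self n 2)
    (powersetCardAverage_monotoneOn hd) (powersetCardAverage_nonneg hd0 _) (fun t ht => ?_)
    (fun t ht => ?_) ?_
  · have : 2 * (t : ℝ) ≤ n := by exact_mod_cast (by omega : 2 * t ≤ n)
    have : (0 : ℝ) ≤ n - 2 * t := by linarith
    positivity
  · have : (n : ℝ) < 2 * t := by exact_mod_cast (by omega : n < 2 * t)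
    exact mul_nonpos_of_nonneg_of_nonpos (by positivity) (by linarith)
  · rw [sum_range_succ_mul_sub_two_mul]
    have : (0 : ℝ) ≤ n * (n + 1) * (n + 2) / 6 := by positivity
    linarith

def IsSupermodularOn {ι : Type*} [DecidableEq ι] (g : Finset ι → ℝ) (U : Finset ι) : Prop :=
  ∀ R Q : Finset ι, R ⊆ Q → Q ⊆ U → ∀ x ∈ U \ Q, g (insert x R) - g R ≤ g (insert x Q) - g Q

theorem IsSupermodularOn.mono {ι : Type*} [DecidableEq ι] {g : Finset ι → ℝ} {U V : Finset ι}
    (hg : IsSupermodularOn g U) (hVU : V ⊆ U) : IsSupermodularOn g V :=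
  fun R Q hRQ hQV x hx => hg R Q hRQ (hQV.trans hVU) x (sdiff_subset_sdiff hVU le_rfl hx)

theorem IsSupermodularOn.insert_sub_le {ι : Type*} [DecidableEq ι] {g : Finset ι → ℝ}
    {U R Q : Finset ι} {i : ι} (hg : IsSupermodularOn g U) (hi : i ∈ U) (hRQ : R ⊆ Q)
    (hQ : Q ⊆ U.erase i) : g (insert i R) - g R ≤ g (insert i Q) - g Q :=
  hg R Q hRQ (hQ.trans (erase_subset i U)) i (mem_sdiff.2 ⟨hi, fun h => notMem_erase i U (hQ h)⟩)

section SingleTask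

variable {ι : Type*} [DecidableEq ι] {g : Finset ι → ℝ} {N T : Finset ι} {i i' : ι}

theorem replica_insert {U S : Finset ι}
    (hrep : ∀ S ⊆ U, g (S ∪ {i}) = g (S ∪ {i'}) ∧ g (S ∪ {i'}) = g (S ∪ {i, i'}))
    (hS : S ⊆ U) :
    g (insert i' S) = g (insert i S) ∧ g (insert i (insert i' S)) = g (insert i S) := by
  obtain ⟨h1, h2⟩ := hrep S hS
  rw [union_singleton, union_singleton] at h1
  rw [show ({i, i'} : Finset ι) = insert i {i'} from rfl, union_insert, union_singleton] at h2
  exact ⟨h1.symm, h2.symm.trans h1.symm⟩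

variable (g) in
theorem singleTaskValue_eq_add_sum (N : Finset ι) :
    singleTaskValue g N = g N + ∑ j ∈ N, (g N - g {j}) := by
  rw [singleTaskValue, sum_sub_distrib, sum_const, nsmul_eq_mul]
  ring

theorem singleTaskValue_insert_sub (hiT : i ∉ T) :
    singleTaskValue g (insert i T) - singleTaskValue g T
      = (T.card + 1) * (g (insert i T) - g T) + g (insert i T) - g {i} := by
  rw [singleTaskValue, singleTaskValue, card_insert_of_notMem hiT, sum_insert hiT]
  push_cast
  ring

theorem singleTaskValue_insert_insert_sub_of_replica (hiT : i ∉ T) (hi'T : i' ∉ T)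
    (hii' : i ≠ i') (hrep₁ : g (insert i' T) = g (insert i T))
    (hrep₂ : g (insert i (insert i' T)) = g (insert i T)) :
    singleTaskValue g (insert i (insert i' T)) - singleTaskValue g (insert i' T)
      = g (insert i T) - g {i} := by
  have hi : i ∉ insert i' T := by simp [hii', hiT]
  rw [singleTaskValue_insert_sub hi, card_insert_of_notMem hi'T, hrep₁, hrep₂, sub_self, mul_zero,
    zero_add]

theorem singleTaskValue_insert_sub_le (hi : i ∈ N) (hT : T ⊆ N.erase i)
    (hg0 : 0 ≤ g (N.erase i)) (hmono : MonotoneOn g (Set.Iic N)) (hsuper : IsSupermodularOn g N) :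
    singleTaskValue g (insert i T) - singleTaskValue g T ≤ singleTaskValue g N := by
  set E := N.erase i
  have hEN : E ⊆ N := erase_subset i N
  have hiT : i ∉ T := fun h => notMem_erase i N (hT h)
  have hiTN : insert i T ⊆ N := insert_subset hi (hT.trans hEN)
  have hEcard : (E.card : ℝ) = N.card - 1 := by
    rw [← card_erase_add_one hi]; push_cast; ring
  have hcard : (T.card : ℝ) + 1 ≤ N.card := by
    have : (T.card : ℝ) ≤ E.card := by exact_mod_cast card_le_card hT
    linarith
  have hgT : g T ≤ g (insert i T) := hmono ((subset_insert i T).trans hiTN) hiTN (subset_insert i T)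
  have hgiT : g (insert i T) ≤ g N := hmono hiTN Set.self_mem_Iic hiTN
  have hmarg : g (insert i T) - g T ≤ g N - g E := by
    simpa only [E, insert_erase hi] using hsuper.insert_sub_le hi hT subset_rfl
  have hsingle : ∑ j ∈ E, g {j} ≤ (N.card - 1) * g E := by
    rw [← hEcard, ← nsmul_eq_mul, ← sum_const]
    exact sum_le_sum fun j hj => hmono (singleton_subset_iff.2 (hEN hj)) hEN
      (singleton_subset_iff.2 hj)
  rw [singleTaskValue_insert_sub hiT, singleTaskValue, ← add_sum_erase N _ hi]
  linarith [mul_le_mul_of_nonneg_right hcard (sub_nonneg.2 hgT),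
    mul_le_mul_of_nonneg_left hmarg (by positivity : (0 : ℝ) ≤ N.card)]

theorem shapleySum_singleTaskValue_le (hi : i ∈ N) (hg0 : 0 ≤ g (N.erase i))
    (hmono : MonotoneOn g (Set.Iic N)) (hsuper : IsSupermodularOn g N) :
    shapleySum N (singleTaskValue g) i ≤ singleTaskValue g N := by
  calc shapleySum N (singleTaskValue g) i
      ≤ ∑ T ∈ (N.erase i).powerset, shapleyWeight N.card T.card * singleTaskValue g N :=
        sum_le_sum fun T hT => mul_le_mul_of_nonneg_left
          (singleTaskValue_insert_sub_le hi (mem_powerset.1 hT) hg0 hmono hsuper)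
          (shapleyWeight_nonneg _ _)
    _ = singleTaskValue g N := by
        rw [← sum_mul, ← card_erase_add_one hi, sum_powerset_shapleyWeight, one_mul]

theorem shapleySum_insert_of_replica (hi : i ∈ N) (hi' : i' ∉ N)
    (hrep : ∀ T ⊆ N.erase i,
      g (insert i' T) = g (insert i T) ∧ g (insert i (insert i' T)) = g (insert i T)) :
    shapleySum (insert i' N) (singleTaskValue g) i
      = ∑ T ∈ (N.erase i).powerset,
        (shapleyWeight ((N.erase i).card + 2) T.card
          * (singleTaskValue g (insert i T) - singleTaskValue g T)
        + shapleyWeight ((N.erase i).card + 2) (T.card + 1) * (g (insert i T) - g {i})) := by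
  have hii' : i' ≠ i := fun h => hi' (h ▸ hi)
  have hi'T : ∀ T ⊆ N.erase i, i' ∉ T := fun T hT h => hi' (erase_subset i N (hT h))
  rw [shapleySum, card_insert_of_notMem hi', ← card_erase_add_one hi, erase_insert_of_ne hii',
    sum_powerset_insert (hi'T _ subset_rfl), ← sum_add_distrib]
  refine sum_congr rfl fun T hT => ?_
  have hTE := mem_powerset.1 hT
  have hiT : i ∉ T := fun h => notMem_erase i N (hTE h)
  rw [card_insert_of_notMem (hi'T T hTE), singleTaskValue_insert_insert_sub_of_replica
    hiT (hi'T T hTE) hii'.symm (hrep T hTE).1 (hrep T hTE).2]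

theorem two_mul_shapleySum_insert_replica_le (hi : i ∈ N) (hi' : i' ∉ N)
    (hmono : MonotoneOn g (Set.Iic N)) (hsuper : IsSupermodularOn g N)
    (hrep : ∀ T ⊆ N.erase i,
      g (insert i' T) = g (insert i T) ∧ g (insert i (insert i' T)) = g (insert i T)) :
    2 * shapleySum (insert i' N) (singleTaskValue g) i
      ≤ shapleySum N (singleTaskValue g) i + (g N - g {i}) := by
  have hNcard : N.card = (N.erase i).card + 1 := (card_erase_add_one hi).symm
  rw [shapleySum_insert_of_replica hi hi' hrep]
  set E := N.erase i
  set n := E.card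
  have hinsN : ∀ T ⊆ E, insert i T ⊆ N := fun T hT => insert_subset hi (hT.trans (erase_subset i N))
  -- The weights of `T` and `insert i' T` in the larger market add up to the weight of `T` in `N`.
  have hstep : ∀ T ∈ E.powerset,
      2 * (shapleyWeight (n + 2) T.card * (singleTaskValue g (insert i T) - singleTaskValue g T)
        + shapleyWeight (n + 2) (T.card + 1) * (g (insert i T) - g {i}))
      = shapleyWeight (n + 1) T.card * (singleTaskValue g (insert i T) - singleTaskValue g T)
        + shapleyWeight (n + 1) T.card * (g (insert i T) - g {i})
        + 1 / (n + 2) * (shapleyWeight (n + 1) T.card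
          * (((T.card : ℝ) + 1) * (n - 2 * T.card)) * (g (insert i T) - g T)) := by
    intro T hT
    have hTE := mem_powerset.1 hT
    rw [shapleyWeight_succ (card_le_card hTE), shapleyWeight_succ_succ,
      singleTaskValue_insert_sub fun h => notMem_erase i N (hTE h)]
    field_simp
    ring
  have hgain : ∑ T ∈ E.powerset, shapleyWeight (n + 1) T.card * (g (insert i T) - g {i})
      ≤ g N - g {i} := by
    calc _ ≤ ∑ T ∈ E.powerset, shapleyWeight (n + 1) T.card * (g N - g {i}) :=
          sum_le_sum fun T hT => mul_le_mul_of_nonneg_left (sub_le_sub_right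
            (hmono (hinsN T (mem_powerset.1 hT)) Set.self_mem_Iic (hinsN T (mem_powerset.1 hT))) _)
            (shapleyWeight_nonneg _ _)
      _ = g N - g {i} := by rw [← sum_mul, sum_powerset_shapleyWeight, one_mul]
  have hchebyshev := sum_powerset_shapleyWeight_mul_nonpos (E := E)
    (d := fun T => g (insert i T) - g T)
    (fun T hT => sub_nonneg.2 (hmono ((subset_insert i T).trans (hinsN T hT)) (hinsN T hT)
      (subset_insert i T)))
    (fun T hT x hx _ => hsuper.insert_sub_le hi (subset_insert x T) (insert_subset hx hT))
  calc _ = shapleySum N (singleTaskValue g) i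
        + ∑ T ∈ E.powerset, shapleyWeight (n + 1) T.card * (g (insert i T) - g {i})
        + 1 / (n + 2) * ∑ T ∈ E.powerset, shapleyWeight (n + 1) T.card
          * (((T.card : ℝ) + 1) * (n - 2 * T.card)) * (g (insert i T) - g T) := by
        rw [mul_sum, sum_congr rfl hstep, sum_add_distrib, sum_add_distrib, ← mul_sum,
          shapleySum, hNcard]
    _ ≤ shapleySum N (singleTaskValue g) i + (g N - g {i}) + 1 / (n + 2) * 0 := by
        gcongr
    _ = shapleySum N (singleTaskValue g) i + (g N - g {i}) := by ring

end SingleTask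

theorem two_mul_div_mul_le_div_mul_add {G A a Φ Φ' : ℝ} (hG : 0 < G) (hA : 0 ≤ A) (ha : 0 ≤ a)
    (hΦ : Φ ≤ G + A) (hΦ' : 2 * Φ' ≤ Φ + a) :
    2 * (1 / (G + A + a) * Φ') * (A + a) ≤ 1 / (G + A) * Φ * A + a := by
  have hV : 0 < G + A := by linarith
  calc 2 * (1 / (G + A + a) * Φ') * (A + a) = 2 * Φ' * ((A + a) / (G + A + a)) := by ring
    _ ≤ (Φ + a) * ((A + a) / (G + A + a)) := by gcongr
    _ = 1 / (G + A) * Φ * A + a - a * G * (G + A - Φ) / ((G + A) * (G + A + a)) := by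
        field_simp
        ring
    _ ≤ 1 / (G + A) * Φ * A + a := by
        have : 0 ≤ a * G * (G + A - Φ) / ((G + A) * (G + A + a)) := by
          apply div_nonneg _ (by positivity)
          exact mul_nonneg (mul_nonneg ha hG.le) (by linarith)
        linarith

theorem singleTask_robust_to_replication_general {ι : Type*} [DecidableEq ι] (N : Finset ι)
    (i : ι) (hi : i ∈ N) (i' : ι) (hi' : i' ∉ N)
    (NR : Finset ι) (hNR : NR = insert i' N)
    (g : Finset ι → ℝ)
    (hg_nonneg : ∀ S ⊆ NR, 0 ≤ g S)
    (hg_mono : ∀ R Q : Finset ι, R ⊆ Q → Q ⊆ NR → g R ≤ g Q)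
    (hg_super : ∀ R Q : Finset ι, R ⊆ Q → Q ⊆ NR → ∀ x ∈ NR \ Q,
      g (insert x R) - g R ≤ g (insert x Q) - g Q)
    (hgN : 0 < g N)
    (hrep : ∀ S ⊆ NR, g (S ∪ {i}) = g (S ∪ {i'}) ∧ g (S ∪ {i'}) = g (S ∪ {i, i'}))
    (a : ι → ℝ) (ha : ∀ j ∈ N, a j = g N - g {j})
    (A : ℝ) (hA : A = ∑ j ∈ N, a j) :
    2 * shapley NR (singleTaskValue g) i * (A + a i)
      ≤ shapley N (singleTaskValue g) i * A + a i := by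
  subst hNR
  have hN : N ⊆ insert i' N := subset_insert i' N
  have hEN : N.erase i ⊆ N := erase_subset i N
  have hmono : MonotoneOn g (Set.Iic N) := fun R _ Q hQ hRQ => hg_mono R Q hRQ (hQ.trans hN)
  have hsuper : IsSupermodularOn g N := IsSupermodularOn.mono hg_super hN
  have hrepN : ∀ T ⊆ N,
      g (insert i' T) = g (insert i T) ∧ g (insert i (insert i' T)) = g (insert i T) :=
    fun T hT => replica_insert hrep (hT.trans hN)
  have ha_nonneg : ∀ j ∈ N, 0 ≤ a j := fun j hj => (ha j hj).symm ▸
    sub_nonneg.2 (hmono (singleton_subset_iff.2 hj) Set.self_mem_Iic (singleton_subset_iff.2 hj))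
  have hvN : singleTaskValue g N = g N + A := by
    rw [singleTaskValue_eq_add_sum, hA, sum_congr rfl ha]
  have hvNR : singleTaskValue g (insert i' N) = g N + A + a i := by
    have hsingle : g {i'} = g {i} := by
      simpa only [insert_empty] using (hrepN ∅ (empty_subset N)).1
    have h := singleTaskValue_insert_sub (g := g) hi'
    rw [(hrepN N subset_rfl).1, insert_eq_of_mem hi, hsingle, sub_self, mul_zero, zero_add] at h
    linarith [ha i hi]
  rw [shapley_eq_shapleySum, shapley_eq_shapleySum, hvNR, hvN]
  refine two_mul_div_mul_le_div_mul_add hgN (hA ▸ sum_nonneg ha_nonneg) (ha_nonneg i hi) ?_ ?_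
  · rw [← hvN]
    exact shapleySum_singleTaskValue_le hi (hg_nonneg _ (hEN.trans hN)) hmono hsuper
  · rw [ha i hi]
    exact two_mul_shapleySum_insert_replica_le hi hi' hmono hsuper
      fun T hT => hrepN T (hT.trans hEN)

/-- single-task market is robust to replication: for a nonnegative,
monotone and supermodular gain function `g` with `g(N) > 0` and replicas `i, i'`,
the payoff of party `i` after replicating its data once does not exceed its payoff
in the original market: `2·φ^R(i)·(A + a_i) ≤ φ(i)·A + a_i`. -/
theorem singleTask_robust_to_replication {ι : Type*} [DecidableEq ι] (N : Finset ι)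
    (M : ℕ) (hcard : N.card = M) (hM : 1 ≤ M)
    (i : ι) (hi : i ∈ N) (i' : ι) (hi' : i' ∉ N)
    (NR : Finset ι) (hNR : NR = insert i' N)
    (g : Finset ι → ℝ)
    (hg_nonneg : ∀ S ⊆ NR, 0 ≤ g S)
    (hg_mono : ∀ R Q : Finset ι, R ⊆ Q → Q ⊆ NR → g R ≤ g Q)
    (hg_super : ∀ R Q : Finset ι, R ⊆ Q → Q ⊆ NR → ∀ x ∈ NR \ Q,
      g (insert x R) - g R ≤ g (insert x Q) - g Q)
    (hgN : 0 < g N)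
    (hrep : ∀ S ⊆ NR, g (S ∪ {i}) = g (S ∪ {i'}) ∧ g (S ∪ {i'}) = g (S ∪ {i, i'}))
    (a : ι → ℝ) (ha : ∀ j ∈ N, a j = g N - g {j})
    (A : ℝ) (hA : A = ∑ j ∈ N, a j) :
    2 * shapley NR (singleTaskValue g) i * (A + a i)
      ≤ shapley N (singleTaskValue g) i * A + a i :=
  singleTask_robust_to_replication_general N i hi i' hi' NR hNR g hg_nonneg hg_mono hg_super hgN
    hrep a ha A hA
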